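/- arXiv:2105.05292 — 2 statements merged into one kernel-verified Lean document; each statement's English description precedes it below -/
import Mathlib

section
/- Let k ≤ n be natural numbers with k ≥ 1. In the polynomial ring in variables x_1,...,x_n, the ideal generated by {e_1(x_1,...,x_n), e_k(x_1,...,x_n)} equals the ideal generated by {e_1(x_1,...,x_n), e_1(x_1,...,x_{n-1})·e_{k-1}(x_1,...,x_{n-1}) − e_k(x_1,...,x_{n-1})}. -/
/- Removing the last variable x_n gives e_1(x_1..x_n) = e_1(x_1..x_{n-1}) + x_n and
e_k(x_1..x_n) = e_k(x_1..x_{n-1}) + x_n e_{k-1}(x_1..x_{n-1}). Hence the second generator on the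
right equals e_1(x_1..x_n) e_{k-1}(x_1..x_{n-1}) - e_k(x_1..x_n), which differs from -e_k(x_1..x_n)
by a multiple of the common generator e_1(x_1..x_n). -/

open MvPolynomial Finset

/-- Elementary symmetric polynomial of degree `k` in the first `m` variables `x_1,…,x_m`
(0-indexed: the variables `X i` with `(i : ℕ) < m`), viewed in the polynomial ring in
`n` variables. It is `1` for `k = 0` and `0` for `k > m`. -/
noncomputable def esymb (R : Type) [CommRing R] (n m k : ℕ) : MvPolynomial (Fin n) R :=
  ∑ S ∈ (Finset.univ.filter (fun i : Fin n => (i : ℕ) < m)).powersetCard k, ∏ i ∈ S, X i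

/-- Complete homogeneous symmetric polynomial of degree `k` in the first `m` variables
`x_1,…,x_m` (0-indexed: the variables `X i` with `(i : ℕ) < m`), viewed in the polynomial
ring in `n` variables. It is `1` for `k = 0` and, for `k > 0`, it is `0` when `m = 0`. -/
noncomputable def hsymb (R : Type) [CommRing R] (n m k : ℕ) : MvPolynomial (Fin n) R :=
  ∑ μ ∈ (Finset.univ.filter (fun i : Fin n => (i : ℕ) < m)).sym k,
    ((μ : Multiset (Fin n)).map X).prod

theorem Ideal.span_pair_mul_sub {α : Type*} [CommRing α] (x y z : α) :
    span {x, x * z - y} = span {x, y} := by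
  rw [← span_pair_neg, neg_sub, span_pair_sub_left_mul]

theorem Multiset.esymm_cons_succ {R : Type*} [CommSemiring R] (a : R) (s : Multiset R) (k : ℕ) :
    (a ::ₘ s).esymm (k + 1) = s.esymm (k + 1) + a * s.esymm k := by
  simp [Multiset.esymm, Multiset.powersetCard_cons, Multiset.sum_map_mul_left]

theorem Fin.val_filter_lt_succ {n m : ℕ} (hm : m < n) :
    (univ.filter fun i : Fin n => (i : ℕ) < m + 1).val =
      (⟨m, hm⟩ : Fin n) ::ₘ (univ.filter fun i : Fin n => (i : ℕ) < m).val := by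
  have hmem : (⟨m, hm⟩ : Fin n) ∉ univ.filter fun i : Fin n => (i : ℕ) < m := by simp
  rw [← cons_val hmem]
  congr 1
  ext i
  simp only [mem_filter, mem_univ, true_and, cons_eq_insert, mem_insert, Fin.ext_iff]
  omega

theorem esymb_eq_esymm (R : Type) [CommRing R] (n m k : ℕ) :
    esymb R n m k = ((univ.filter fun i : Fin n => (i : ℕ) < m).val.map X).esymm k :=
  (Finset.esymm_map_val _ _ _).symm

theorem esymb_zero (R : Type) [CommRing R] (n m : ℕ) : esymb R n m 0 = 1 := by
  simp [esymb]

theorem esymb_fin_zero_succ (R : Type) [CommRing R] (m k : ℕ) : esymb R 0 m (k + 1) = 0 := by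
  rw [esymb, powersetCard_eq_empty.2]
  · rfl
  · simp

theorem esymb_succ_succ (R : Type) [CommRing R] {n m : ℕ} (hm : m < n) (k : ℕ) :
    esymb R n (m + 1) (k + 1) = esymb R n m (k + 1) + X ⟨m, hm⟩ * esymb R n m k := by
  simp only [esymb_eq_esymm, Fin.val_filter_lt_succ hm, Multiset.map_cons,
    Multiset.esymm_cons_succ]

theorem stmt10_general (R : Type) [CommRing R] (n k : ℕ) (hk : 1 ≤ k) :
    Ideal.span {esymb R n n 1, esymb R n n k} =
      Ideal.span {esymb R n n 1,
        esymb R n (n - 1) 1 * esymb R n (n - 1) (k - 1) - esymb R n (n - 1) k} := by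
  obtain ⟨j, rfl⟩ := Nat.exists_eq_add_of_le' hk
  obtain _ | m := n
  · simp only [esymb_fin_zero_succ, zero_mul, sub_zero]
  have key : esymb R (m + 1) m 1 * esymb R (m + 1) m j - esymb R (m + 1) m (j + 1) =
      esymb R (m + 1) (m + 1) 1 * esymb R (m + 1) m j - esymb R (m + 1) (m + 1) (j + 1) := by
    rw [esymb_succ_succ R m.lt_succ_self, esymb_succ_succ R m.lt_succ_self, esymb_zero]
    ring
  simp only [Nat.add_sub_cancel]
  rw [key, Ideal.span_pair_mul_sub]

/-- ⟨e_1(x_1,…,x_n), e_k(x_1,…,x_n)⟩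
 = ⟨e_1(x_1,…,x_n), e_1(x_1,…,x_{n-1}) e_{k-1}(x_1,…,x_{n-1}) − e_k(x_1,…,x_{n-1})⟩. -/
theorem stmt10 (R : Type) [CommRing R] (n k : ℕ) (hk : 1 ≤ k) (hkn : k ≤ n) :
    Ideal.span {esymb R n n 1, esymb R n n k} =
      Ideal.span {esymb R n n 1,
        esymb R n (n - 1) 1 * esymb R n (n - 1) (k - 1) - esymb R n (n - 1) k} :=
  stmt10_general R n k hk
end

section
/- For every natural number k with 1 ≤ k ≤ n, the alternating sum ∑_{i=0}^{k} (-1)^i e_i(x_1,...,x_n) h_{k-i}(x_1,...,x_{n-k+1}) equals 0 in the polynomial ring in n variables. -/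
open MvPolynomial Finset

section Aux

variable {α M : Type*} [DecidableEq α] [AddCommMonoid M]

/-- Split a sum over `s.sym (k+1)` according to whether it contains `a ∈ s`. -/
lemma sym_split {s : Finset α} {a : α} (ha : a ∈ s) (k : ℕ) (f : Multiset α → M) :
    ∑ μ ∈ s.sym (k+1), f ↑μ
      = ∑ μ ∈ (s.erase a).sym (k+1), f ↑μ + ∑ μ ∈ s.sym k, f (a ::ₘ ↑μ) := by
  rw [← Finset.sum_filter_add_sum_filter_not (s.sym (k+1)) (fun μ => a ∈ μ), add_comm]
  congr 1
  · apply Finset.sum_congr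
    · ext μ
      simp only [mem_filter, Finset.mem_sym_iff, Finset.mem_erase]
      constructor
      · rintro ⟨h1, h2⟩ b hb
        exact ⟨fun hba => h2 (hba ▸ hb), h1 b hb⟩
      · intro h
        exact ⟨fun b hb => (h b hb).2, fun hmem => (h a hmem).1 rfl⟩
    · intros; rfl
  · have himg : (s.sym (k+1)).filter (fun μ => a ∈ μ) = (s.sym k).image (Sym.cons a) := by
      ext μ
      simp only [mem_filter, Finset.mem_image, Finset.mem_sym_iff]
      constructor
      · rintro ⟨h1, h2⟩
        refine ⟨μ.erase a h2, fun b hb => h1 b ?_, Sym.cons_erase h2⟩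
        · have hb' : b ∈ ((μ.erase a h2 : Sym α k) : Multiset α) := hb
          rw [Sym.coe_erase h2] at hb'
          exact Multiset.mem_of_mem_erase hb'
      · rintro ⟨ν, hν, rfl⟩
        exact ⟨fun b hb => by
          rcases Sym.mem_cons.mp hb with h | h
          · exact h ▸ ha
          · exact hν b h, Sym.mem_cons_self a ν⟩
    rw [himg, Finset.sum_image (fun x _ y _ h => (Sym.cons_inj_right a x y).mp h)]
    apply Finset.sum_congr rfl
    intros; rfl

/-- Split a sum over `(insert a t).powersetCard (k+1)` for `a ∉ t`. -/
lemma pcard_split {t : Finset α} {a : α} (ha : a ∉ t) (k : ℕ) (g : Finset α → M) :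
    ∑ S ∈ (insert a t).powersetCard (k+1), g S
      = ∑ S ∈ t.powersetCard (k+1), g S + ∑ S ∈ t.powersetCard k, g (insert a S) := by
  rw [Finset.powersetCard_succ_insert ha, Finset.sum_union, Finset.sum_image]
  · intro x hx y hy h
    rw [Finset.mem_coe, Finset.mem_powersetCard] at hx hy
    have hax : a ∉ x := fun hc => ha (hx.1 hc)
    have hay : a ∉ y := fun hc => ha (hy.1 hc)
    rw [← Finset.erase_insert hax, h, Finset.erase_insert hay]
  · rw [Finset.disjoint_left]
    intro S hS hS'
    rw [Finset.mem_powersetCard] at hS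
    rcases Finset.mem_image.mp hS' with ⟨T, hT, rfl⟩
    exact ha (hS.1 (Finset.mem_insert_self a T))

end Aux

/-- Elementary symmetric polynomial of degree `k` in the *last* variables
`x_{m+1}, …, x_n` (0-indexed: the variables `X i` with `m ≤ (i : ℕ)`). -/
noncomputable def etail (R : Type) [CommRing R] (n m k : ℕ) : MvPolynomial (Fin n) R :=
  ∑ S ∈ (Finset.univ.filter (fun i : Fin n => m ≤ (i : ℕ))).powersetCard k, ∏ i ∈ S, X i

section Lemmas

variable (R : Type) [CommRing R] (n : ℕ)

lemma filterA_succ (m : ℕ) (hm : m < n) :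
    Finset.univ.filter (fun i : Fin n => (i : ℕ) < m + 1)
      = insert ⟨m, hm⟩ (Finset.univ.filter (fun i : Fin n => (i : ℕ) < m)) := by
  ext i
  simp only [mem_filter, mem_univ, true_and, Finset.mem_insert, Fin.ext_iff]
  omega

lemma filterA_not_mem (m : ℕ) (hm : m < n) :
    (⟨m, hm⟩ : Fin n) ∉ Finset.univ.filter (fun i : Fin n => (i : ℕ) < m) := by
  simp

lemma filterB_succ (m : ℕ) (hm : m < n) :
    Finset.univ.filter (fun i : Fin n => m ≤ (i : ℕ))
      = insert ⟨m, hm⟩ (Finset.univ.filter (fun i : Fin n => m + 1 ≤ (i : ℕ))) := by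
  ext i
  simp only [mem_filter, mem_univ, true_and, Finset.mem_insert, Fin.ext_iff]
  omega

lemma filterB_not_mem (m : ℕ) (hm : m < n) :
    (⟨m, hm⟩ : Fin n) ∉ Finset.univ.filter (fun i : Fin n => m + 1 ≤ (i : ℕ)) := by
  simp

lemma hsymb_m_zero (j : ℕ) : hsymb R n 0 j = if j = 0 then 1 else 0 := by
  have h0 : Finset.univ.filter (fun i : Fin n => (i : ℕ) < 0) = ∅ := by
    ext i; simp
  cases j with
  | zero =>
    rw [hsymb, Finset.sym_zero, Finset.sum_singleton]
    rfl
  | succ j => simp [hsymb, h0, Finset.sym_empty]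

lemma hsymb_k_zero (m : ℕ) : hsymb R n m 0 = 1 := by
  rw [hsymb, Finset.sym_zero, Finset.sum_singleton]
  rfl

lemma esymb_k_zero (m : ℕ) : esymb R n m 0 = 1 := by
  simp [esymb]

lemma etail_k_zero (m : ℕ) : etail R n m 0 = 1 := by
  simp [etail]

lemma etail_zero_eq (k : ℕ) : etail R n 0 k = esymb R n n k := by
  unfold etail esymb
  have h : Finset.univ.filter (fun i : Fin n => 0 ≤ (i : ℕ))
      = Finset.univ.filter (fun i : Fin n => (i : ℕ) < n) := by
    ext i
    simp [i.isLt]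
  rw [h]

lemma hsymb_succ (m j : ℕ) (hm : m < n) :
    hsymb R n (m + 1) (j + 1)
      = hsymb R n m (j + 1) + X ⟨m, hm⟩ * hsymb R n (m + 1) j := by
  unfold hsymb
  have ha : (⟨m, hm⟩ : Fin n) ∈ Finset.univ.filter (fun i : Fin n => (i : ℕ) < m + 1) := by
    simp
  rw [sym_split ha j (fun μ => (μ.map X).prod)]
  congr 1
  · apply Finset.sum_congr _ (fun _ _ => rfl)
    rw [filterA_succ n m hm, Finset.erase_insert (filterA_not_mem n m hm)]
  · rw [Finset.mul_sum]
    apply Finset.sum_congr rfl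
    intro μ _
    rw [Multiset.map_cons, Multiset.prod_cons]

lemma etail_succ (m k : ℕ) (hm : m < n) :
    etail R n m (k + 1)
      = etail R n (m + 1) (k + 1) + X ⟨m, hm⟩ * etail R n (m + 1) k := by
  unfold etail
  rw [filterB_succ n m hm, pcard_split (filterB_not_mem n m hm) k]
  congr 1
  rw [Finset.mul_sum]
  apply Finset.sum_congr rfl
  intro S hS
  rw [Finset.mem_powersetCard] at hS
  have haS : (⟨m, hm⟩ : Fin n) ∉ S := fun hc => filterB_not_mem n m hm (hS.1 hc)
  rw [Finset.prod_insert haS]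

lemma main_identity : ∀ m, m ≤ n → ∀ k,
    ∑ i ∈ Finset.range (k + 1), (-1 : MvPolynomial (Fin n) R) ^ i *
        esymb R n n i * hsymb R n m (k - i) = (-1) ^ k * etail R n m k := by
  intro m
  induction m with
  | zero =>
    intro _ k
    rw [Finset.sum_eq_single k]
    · rw [Nat.sub_self, hsymb_k_zero, etail_zero_eq, mul_one]
    · intro b hb hbk
      rw [Finset.mem_range] at hb
      have : k - b ≠ 0 := by omega
      rw [hsymb_m_zero, if_neg this, mul_zero]
    · intro h
      exact absurd (Finset.self_mem_range_succ k) h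
  | succ m ih =>
    intro hm1 k
    have hm : m < n := hm1
    induction k with
    | zero =>
      simp [esymb_k_zero, hsymb_k_zero, etail_k_zero]
    | succ k ihk =>
      rw [Finset.sum_range_succ]
      have hsplit : ∀ i ∈ Finset.range (k + 1),
          (-1 : MvPolynomial (Fin n) R) ^ i * esymb R n n i * hsymb R n (m + 1) (k + 1 - i)
            = (-1) ^ i * esymb R n n i * hsymb R n m (k + 1 - i)
              + X ⟨m, hm⟩ * ((-1) ^ i * esymb R n n i * hsymb R n (m + 1) (k - i)) := by
        intro i hi
        rw [Finset.mem_range] at hi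
        have h1 : k + 1 - i = (k - i) + 1 := by omega
        rw [h1, hsymb_succ R n m (k - i) hm]
        ring
      rw [Finset.sum_congr rfl hsplit, Finset.sum_add_distrib, ← Finset.mul_sum, ihk]
      have hT := ih (le_of_lt hm1) (k + 1)
      rw [Finset.sum_range_succ, Nat.sub_self, hsymb_k_zero,
        etail_succ R n m k hm] at hT
      rw [Nat.sub_self, hsymb_k_zero]
      linear_combination hT

end Lemmas

lemma card_filterB (n m : ℕ) :
    (Finset.univ.filter (fun i : Fin n => m ≤ (i : ℕ))).card = n - m := by
  rw [← Finset.card_map ⟨Fin.val, Fin.val_injective⟩]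
  have : (Finset.univ.filter (fun i : Fin n => m ≤ (i : ℕ))).map
      ⟨Fin.val, Fin.val_injective⟩ = Finset.Ico m n := by
    ext x
    simp only [Finset.mem_map, mem_filter, mem_univ, true_and, Finset.mem_Ico,
      Function.Embedding.coeFn_mk]
    constructor
    · rintro ⟨i, hi, rfl⟩; exact ⟨hi, i.isLt⟩
    · rintro ⟨h1, h2⟩; exact ⟨⟨x, h2⟩, h1, rfl⟩
  rw [this, Nat.card_Ico]

/-- ∑_{i=0}^{k} (-1)^i e_i(x_1,…,x_n) h_{k-i}(x_1,…,x_{n-k+1}) = 0 for 1 ≤ k ≤ n. -/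
theorem stmt12 (R : Type) [CommRing R] (n k : ℕ) (hk : 1 ≤ k) (hkn : k ≤ n) :
    ∑ i ∈ Finset.range (k + 1), (-1 : MvPolynomial (Fin n) R) ^ i *
        esymb R n n i * hsymb R n (n + 1 - k) (k - i) = 0 := by
  rw [main_identity R n (n + 1 - k) (by omega) k]
  have hzero : etail R n (n + 1 - k) k = 0 := by
    unfold etail
    rw [Finset.powersetCard_eq_empty.mpr (by rw [card_filterB]; omega), Finset.sum_empty]
  rw [hzero, mul_zero]
end
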